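/- Let h₁, h₂, h₃ be independent exponential random variables with rate 1. Then P(h₁ < h₂/(1+h₃)) = ∫₀^∞ e^{-z}/(2+z) dz. -/

import Mathlib

/-!
Each `h i` has law `expMeasure 1`, so by independence the probability is that of the event
`x < y / (1 + z)` under the product of three copies of this law. For fixed `z ≥ 0` and `x ≥ 0`
the event is `y > (1 + z) x`, of probability `e^{-(1+z)x}`; integrating in `x` is the Laplace
transform of the exponential law at `1 + z`, namely `1 / (2 + z)`, and integrating this against
the density `e^{-z}` gives the right-hand side.
-/

open MeasureTheory ProbabilityTheory Real Set

open scoped ENNReal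

instance isProbabilityMeasure_expMeasure_one : IsProbabilityMeasure (expMeasure 1) :=
  isProbabilityMeasure_expMeasure one_pos

lemma expMeasure_eq_withDensity (r : ℝ) :
    expMeasure r =
      (volume.restrict (Ici 0)).withDensity fun x => ENNReal.ofReal (r * exp (-(r * x))) := by
  have hpdf :
      exponentialPDF r = (Ici 0).indicator fun x => ENNReal.ofReal (r * exp (-(r * x))) := by
    ext x
    rcases lt_or_ge x 0 with hx | hx
    · simp [exponentialPDF_of_neg hx, hx]
    · simp [exponentialPDF_of_nonneg hx, hx]
  rw [← withDensity_indicator measurableSet_Ici, ← hpdf]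
  rfl

lemma ae_nonneg_expMeasure (r : ℝ) : ∀ᵐ x ∂expMeasure r, 0 ≤ x := by
  rw [expMeasure_eq_withDensity]
  exact (withDensity_absolutelyContinuous _ _).ae_le (ae_restrict_mem measurableSet_Ici)

lemma lintegral_expMeasure (r : ℝ) {g : ℝ → ℝ≥0∞} (hg : Measurable g) :
    ∫⁻ x, g x ∂expMeasure r = ∫⁻ x in Ici 0, ENNReal.ofReal (r * exp (-(r * x))) * g x := by
  rw [expMeasure_eq_withDensity, lintegral_withDensity_eq_lintegral_mul _ (by fun_prop) hg]
  rfl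

lemma integral_exp_neg_mul_Ioi {a : ℝ} (ha : 0 < a) (t : ℝ) :
    ∫ x in Ioi t, exp (-(a * x)) = exp (-(a * t)) / a := by
  simp_rw [← neg_mul]
  rw [integral_exp_mul_Ioi (neg_neg_of_pos ha), neg_div_neg_eq]

lemma expMeasure_Ioi {r t : ℝ} (hr : 0 < r) (ht : 0 ≤ t) :
    expMeasure r (Ioi t) = ENNReal.ofReal (exp (-(r * t))) := by
  have hint : IntegrableOn (fun x => r * exp (-(r * x))) (Ioi t) := by
    simp_rw [← neg_mul]
    exact (exp_neg_integrableOn_Ioi t hr).const_mul r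
  rw [expMeasure_eq_withDensity, withDensity_apply _ measurableSet_Ioi,
    Measure.restrict_restrict measurableSet_Ioi, inter_eq_left.2 (Ioi_subset_Ici ht),
    ← ofReal_integral_eq_lintegral_ofReal hint (ae_of_all _ fun x => by positivity),
    integral_const_mul, integral_exp_neg_mul_Ioi hr, mul_div_cancel₀ _ hr.ne']

lemma lintegral_exp_neg_mul_expMeasure {r s : ℝ} (hr : 0 < r) (hs : -r < s) :
    ∫⁻ x, ENNReal.ofReal (exp (-(s * x))) ∂expMeasure r = ENNReal.ofReal (r / (r + s)) := by
  have hrs : 0 < r + s := by linarith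
  have hint : IntegrableOn (fun x => r * exp (-((r + s) * x))) (Ioi 0) := by
    simp_rw [← neg_mul]
    exact (exp_neg_integrableOn_Ioi 0 hrs).const_mul r
  have hdensity : ∀ x, ENNReal.ofReal (r * exp (-(r * x))) * ENNReal.ofReal (exp (-(s * x))) =
      ENNReal.ofReal (r * exp (-((r + s) * x))) := fun x => by
    rw [← ENNReal.ofReal_mul (by positivity), mul_assoc, ← exp_add]
    ring_nf
  rw [lintegral_expMeasure r (by fun_prop), setLIntegral_congr Ioi_ae_eq_Ici.symm]
  simp_rw [hdensity]
  rw [← ofReal_integral_eq_lintegral_ofReal hint (ae_of_all _ fun x => by positivity),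
    integral_const_mul, integral_exp_neg_mul_Ioi hrs, mul_zero, neg_zero, exp_zero, mul_one_div]

lemma MeasureTheory.Measure.ext_of_Ioi_of_nonneg {μ ν : Measure ℝ} [IsProbabilityMeasure μ]
    [IsProbabilityMeasure ν] (h : ∀ t, 0 ≤ t → μ (Ioi t) = ν (Ioi t)) (h0 : μ (Ioi 0) = 1) :
    μ = ν := by
  have hIoi : ∀ t, μ (Ioi t) = ν (Ioi t) := by
    intro t
    rcases le_or_gt 0 t with ht | ht
    · exact h t ht
    have hone : ∀ ρ : Measure ℝ, [IsProbabilityMeasure ρ] → ρ (Ioi 0) = 1 → ρ (Ioi t) = 1 :=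
      fun ρ _ hρ => prob_le_one.antisymm (hρ ▸ measure_mono (Ioi_subset_Ioi ht.le))
    rw [hone μ h0, hone ν (h 0 le_rfl ▸ h0)]
  refine Measure.ext_of_Iic μ ν fun a => ?_
  rw [← compl_Ioi, prob_compl_eq_one_sub measurableSet_Ioi,
    prob_compl_eq_one_sub measurableSet_Ioi, hIoi]

lemma map_eq_expMeasure_of_tail {Ω : Type*} [MeasurableSpace Ω] {μ : Measure Ω}
    [IsProbabilityMeasure μ] {f : Ω → ℝ} (hf : Measurable f) {r : ℝ} (hr : 0 < r)
    (htail : ∀ t, 0 ≤ t → μ {ω | t < f ω} = ENNReal.ofReal (exp (-(r * t)))) :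
    μ.map f = expMeasure r := by
  have := Measure.isProbabilityMeasure_map (μ := μ) hf.aemeasurable
  have := isProbabilityMeasure_expMeasure hr
  refine Measure.ext_of_Ioi_of_nonneg (fun t ht => ?_) ?_
  · rw [Measure.map_apply hf measurableSet_Ioi, expMeasure_Ioi hr ht]
    exact htail t ht
  · rw [Measure.map_apply hf measurableSet_Ioi]
    exact (htail 0 le_rfl).trans (by simp)

lemma ProbabilityTheory.iIndepFun.map_prodMk_prodMk {Ω ι β : Type*} [MeasurableSpace Ω]
    {μ : Measure Ω} [IsProbabilityMeasure μ] [MeasurableSpace β] {f : ι → Ω → β}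
    (hindep : iIndepFun f μ) (hf : ∀ i, Measurable (f i)) {i j k : ι}
    (hij : i ≠ j) (hik : i ≠ k) (hjk : j ≠ k) :
    μ.map (fun ω => ((f i ω, f j ω), f k ω)) =
      ((μ.map (f i)).prod (μ.map (f j))).prod (μ.map (f k)) := by
  rw [(hindep.indepFun_prodMk hf i j k hik hjk).map_prod_eq_prod_map_map (by fun_prop)
      (hf k).aemeasurable,
    (hindep.indepFun hij).map_prod_eq_prod_map_map (hf i).aemeasurable (hf j).aemeasurable]

lemma expMeasure_one_prod_lt_div_one_add {z : ℝ} (hz : 0 ≤ z) :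
    ((expMeasure 1).prod (expMeasure 1)) {p | p.1 < p.2 / (1 + z)} =
      ENNReal.ofReal (1 / (2 + z)) := by
  have hz' : 0 < 1 + z := by linarith
  rw [Measure.prod_apply (measurableSet_lt (by fun_prop) (by fun_prop))]
  calc ∫⁻ x, expMeasure 1 (Prod.mk x ⁻¹' {p | p.1 < p.2 / (1 + z)}) ∂expMeasure 1
      = ∫⁻ x, ENNReal.ofReal (exp (-((1 + z) * x))) ∂expMeasure 1 := by
        refine lintegral_congr_ae ((ae_nonneg_expMeasure 1).mono fun x hx => ?_)
        have hsec : Prod.mk x ⁻¹' {p | p.1 < p.2 / (1 + z)} = Ioi ((1 + z) * x) := by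
          ext y
          simp [lt_div_iff₀ hz', mul_comm]
        dsimp only
        rw [hsec, expMeasure_Ioi one_pos (by positivity), one_mul]
    _ = ENNReal.ofReal (1 / (2 + z)) := by
        rw [lintegral_exp_neg_mul_expMeasure one_pos (by linarith)]
        ring_nf

lemma expMeasure_one_prod_prod_lt_div_one_add :
    (((expMeasure 1).prod (expMeasure 1)).prod (expMeasure 1))
        {p | p.1.1 < p.1.2 / (1 + p.2)} =
      ENNReal.ofReal (∫ z in Ioi 0, exp (-z) / (2 + z)) := by
  have hint : IntegrableOn (fun z => exp (-z) / (2 + z)) (Ioi 0) := by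
    refine (integrableOn_exp_neg_Ioi 0).mono'
      (by fun_prop : Measurable fun z : ℝ => exp (-z) / (2 + z)).aestronglyMeasurable
      ((ae_restrict_iff' measurableSet_Ioi).2 (ae_of_all _ fun z (hz : 0 < z) => ?_))
    rw [norm_of_nonneg (by positivity)]
    exact div_le_self (exp_pos _).le (by linarith)
  rw [Measure.prod_apply_symm (measurableSet_lt (by fun_prop) (by fun_prop))]
  calc ∫⁻ z, ((expMeasure 1).prod (expMeasure 1))
        ((fun x => (x, z)) ⁻¹' {p | p.1.1 < p.1.2 / (1 + p.2)}) ∂expMeasure 1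
      = ∫⁻ z, ENNReal.ofReal (1 / (2 + z)) ∂expMeasure 1 :=
        lintegral_congr_ae ((ae_nonneg_expMeasure 1).mono fun z hz =>
          expMeasure_one_prod_lt_div_one_add hz)
    _ = ∫⁻ z in Ioi 0, ENNReal.ofReal (exp (-z) / (2 + z)) := by
        rw [lintegral_expMeasure 1 (by fun_prop), setLIntegral_congr Ioi_ae_eq_Ici.symm]
        simp_rw [one_mul, ← ENNReal.ofReal_mul (exp_pos _).le, mul_one_div]
    _ = ENNReal.ofReal (∫ z in Ioi 0, exp (-z) / (2 + z)) :=
        (ofReal_integral_eq_lintegral_ofReal hint ((ae_restrict_iff' measurableSet_Ioi).2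
          (ae_of_all _ fun z (hz : 0 < z) => by positivity))).symm

theorem prob_good_vertex_general {Ω : Type*} [MeasurableSpace Ω] (μ : Measure Ω)
    [IsProbabilityMeasure μ] (h : Fin 3 → Ω → ℝ)
    (hmeas : ∀ i, Measurable (h i))
    (hindep : iIndepFun h μ)
    (hexp : ∀ i, ∀ t : ℝ, 0 ≤ t → μ {ω | t < h i ω} = ENNReal.ofReal (Real.exp (-t))) :
    μ {ω | h 0 ω < h 1 ω / (1 + h 2 ω)} =
      ENNReal.ofReal (∫ z in Set.Ioi (0:ℝ), Real.exp (-z) / (2 + z)) := by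
  have hlaw : ∀ i, μ.map (h i) = expMeasure 1 := fun i =>
    map_eq_expMeasure_of_tail (hmeas i) one_pos fun t ht => by rw [one_mul]; exact hexp i t ht
  have hjoint := hindep.map_prodMk_prodMk hmeas (i := 0) (j := 1) (k := 2)
    (by decide) (by decide) (by decide)
  rw [hlaw, hlaw, hlaw] at hjoint
  rw [← expMeasure_one_prod_prod_lt_div_one_add, ← hjoint,
    Measure.map_apply (by fun_prop) (measurableSet_lt (by fun_prop) (by fun_prop))]
  rfl

theorem prob_good_vertex {Ω : Type*} [MeasurableSpace Ω] (μ : Measure Ω)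
    [IsProbabilityMeasure μ] (h : Fin 3 → Ω → ℝ)
    (hmeas : ∀ i, Measurable (h i))
    (hindep : iIndepFun h μ)
    (hpos : ∀ i ω, 0 ≤ h i ω)
    (hexp : ∀ i, ∀ t : ℝ, 0 ≤ t → μ {ω | t < h i ω} = ENNReal.ofReal (Real.exp (-t))) :
    μ {ω | h 0 ω < h 1 ω / (1 + h 2 ω)} =
      ENNReal.ofReal (∫ z in Set.Ioi (0:ℝ), Real.exp (-z) / (2 + z)) :=
  prob_good_vertex_general μ h hmeas hindep hexp
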